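/- No pure Nash equilibrium (x1*, x2*) of the two-player miner's dilemma game with betrayal assumption has x1* = m1 or x2* = m2; that is, neither pool infiltrates all of its mining power at equilibrium. -/
import Mathlib

open Set Filter Topology

/-- Key lemma: pool 1 does not infiltrate everything. -/
theorem key (m1 m2 t p : ℝ) (hm1 : 0 < m1) (hm2 : 0 < m2) (ht : 0 ≤ t)
    (hp0 : 0 ≤ p) (hp1 : p < 1) (y : ℝ) (hy0 : 0 ≤ y) (hy2 : y ≤ m2)
    (hdeg : ¬(t = 0 ∧ p = 0 ∧ y = m2))
    (hnash : ∀ x ∈ Set.Icc (0:ℝ) m1,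
      ((m1*m2 + m1*x + p*m2*y - (1-p)*x^2 - (1-p)*x*y) /
        (((m1+m2+t) - (1-p)*(x+y)) * (m1*m2 + m1*x + m2*y)))
      ≤ ((m1*m2 + m1*m1 + p*m2*y - (1-p)*m1^2 - (1-p)*m1*y) /
        (((m1+m2+t) - (1-p)*(m1+y)) * (m1*m2 + m1*m1 + m2*y))) ) :
    False := by
  have hq : (0:ℝ) < 1 - p := by linarith
  set N : ℝ → ℝ := fun x => (m1*m2 + p*m2*y) + (m1 - (1-p)*y)*x - (1-p)*x^2 with hNdef
  set A : ℝ → ℝ := fun x => ((m1+m2+t) - (1-p)*y) - (1-p)*x with hAdef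
  set B : ℝ → ℝ := fun x => (m1*m2 + m2*y) + m1*x with hBdef
  -- positivity of the factors
  have hAm : 0 < A m1 := by
    simp only [hAdef]
    by_cases hc : p = 0 ∧ t = 0
    · have hym : y ≠ m2 := fun h => hdeg ⟨hc.2, hc.1, h⟩
      have : y < m2 := lt_of_le_of_ne hy2 hym
      rw [hc.1, hc.2]; nlinarith
    · have : 0 < p ∨ 0 < t := by
        by_contra h
        push_neg at h
        exact hc ⟨le_antisymm h.1 hp0, le_antisymm h.2 ht⟩
      rcases this with h | h <;> nlinarith [mul_nonneg hp0 (sub_nonneg.mpr hy2)]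
  have hApos : ∀ x ∈ Set.Icc (0:ℝ) m1, 0 < A x := by
    intro x hx
    have : A m1 ≤ A x := by simp only [hAdef]; nlinarith [hx.2, hq.le]
    linarith
  have hBpos : ∀ x ∈ Set.Icc (0:ℝ) m1, 0 < B x := by
    intro x hx
    simp only [hBdef]
    nlinarith [hx.1, mul_nonneg hm2.le hy0]
  -- the Nash condition as a polynomial inequality
  have hpoly : ∀ x ∈ Set.Icc (0:ℝ) m1,
      N x * (A m1 * B m1) - N m1 * (A x * B x) ≤ 0 := by
    intro x hx
    have h := hnash x hx
    have hDx : 0 < A x * B x := mul_pos (hApos x hx) (hBpos x hx)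
    have hDm : 0 < A m1 * B m1 :=
      mul_pos hAm (hBpos m1 ⟨hm1.le, le_refl m1⟩)
    have hx1 : (m1*m2 + m1*x + p*m2*y - (1-p)*x^2 - (1-p)*x*y) /
        (((m1+m2+t) - (1-p)*(x+y)) * (m1*m2 + m1*x + m2*y)) = N x / (A x * B x) := by
      simp only [hNdef, hAdef, hBdef]; ring_nf
    have hx2 : (m1*m2 + m1*m1 + p*m2*y - (1-p)*m1^2 - (1-p)*m1*y) /
        (((m1+m2+t) - (1-p)*(m1+y)) * (m1*m2 + m1*m1 + m2*y)) = N m1 / (A m1 * B m1) := by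
      simp only [hNdef, hAdef, hBdef]; ring_nf
    rw [hx1, hx2, div_le_div_iff₀ hDx hDm] at h
    linarith
  -- derivative of g at m1
  set E : ℝ := ((m1 - (1-p)*y)*1 - (1-p)*(2*m1)) * (A m1 * B m1) -
      N m1 * (-((1-p)*1) * B m1 + A m1 * (m1*1)) with hEdef
  have hg : HasDerivAt (fun x => N x * (A m1 * B m1) - N m1 * (A x * B x)) E m1 := by
    have hid : HasDerivAt (fun x : ℝ => x) 1 m1 := hasDerivAt_id m1
    have hsq : HasDerivAt (fun x : ℝ => x^2) (2*m1) m1 := by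
      simpa using hasDerivAt_pow 2 m1
    have hN : HasDerivAt N ((m1 - (1-p)*y)*1 - (1-p)*(2*m1)) m1 := by
      simp only [hNdef]
      exact ((hid.const_mul (m1 - (1-p)*y)).const_add (m1*m2 + p*m2*y)).sub
        (hsq.const_mul (1-p))
    have hA : HasDerivAt A (-((1-p)*1)) m1 := by
      simp only [hAdef]
      exact (hid.const_mul (1-p)).const_sub (((m1+m2+t) - (1-p)*y))
    have hB : HasDerivAt B (m1*1) m1 := by
      simp only [hBdef]
      exact (hid.const_mul m1).const_add (m1*m2 + m2*y)
    exact (hN.mul_const _).sub ((hA.mul hB).const_mul (N m1))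
  -- E is negative
  have hE : E < 0 := by
    have hfact : E = (1-p) * (m2 * (-(m2-y)*((1-p)*(y^2+m1*y)+m1^2)
        - p*m1*(y^2+m1*y+m1^2)) - t*(m2*y^2+2*m1*m2*y+2*m1^2*m2+m1^3)) := by
      simp only [hEdef, hNdef, hAdef, hBdef]; ring
    rw [hfact]
    have hT : (0:ℝ) < m2*y^2+2*m1*m2*y+2*m1^2*m2+m1^3 := by positivity
    have hQ0 : (0:ℝ) ≤ y^2+m1*y := by positivity
    have hQ : (0:ℝ) ≤ (1-p)*(y^2+m1*y)+m1^2 :=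
      add_nonneg (mul_nonneg hq.le hQ0) (sq_nonneg m1)
    have hR : (0:ℝ) < y^2+m1*y+m1^2 := by positivity
    have h1 : (0:ℝ) ≤ (m2-y)*((1-p)*(y^2+m1*y)+m1^2) :=
      mul_nonneg (sub_nonneg.mpr hy2) hQ
    refine mul_neg_of_pos_of_neg hq ?_
    by_cases hc : p = 0 ∧ t = 0
    · obtain ⟨hp', ht'⟩ := hc
      subst hp'; subst ht'
      have hym : y < m2 := lt_of_le_of_ne hy2 (fun h => hdeg ⟨rfl, rfl, h⟩)
      have h2 : (0:ℝ) < (m2-y)*(y^2+m1*y+m1^2) :=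
        mul_pos (sub_pos.mpr hym) hR
      nlinarith [mul_pos hm2 h2]
    · have hpt : 0 < p ∨ 0 < t := by
        by_contra h; push_neg at h
        exact hc ⟨le_antisymm h.1 hp0, le_antisymm h.2 ht⟩
      rcases hpt with h | h
      · have h2 : (0:ℝ) < p*m1*(y^2+m1*y+m1^2) :=
          mul_pos (mul_pos h hm1) hR
        nlinarith [mul_nonneg ht hT.le, mul_nonneg hm2.le h1, mul_pos hm2 h2]
      · have hGle : -(m2-y)*((1-p)*(y^2+m1*y)+m1^2) - p*m1*(y^2+m1*y+m1^2) ≤ 0 := by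
          nlinarith [mul_nonneg (mul_nonneg hp0 hm1.le) hR.le]
        have h3 : m2 * (-(m2-y)*((1-p)*(y^2+m1*y)+m1^2) - p*m1*(y^2+m1*y+m1^2)) ≤ 0 :=
          mul_nonpos_of_nonneg_of_nonpos hm2.le hGle
        linarith [mul_pos h hT]
  -- slope argument: find x < m1 with g x > 0
  set g : ℝ → ℝ := fun x => N x * (A m1 * B m1) - N m1 * (A x * B x) with hgdef
  have hslope : Filter.Tendsto (slope g m1) (𝓝[≠] m1) (𝓝 E) :=
    hasDerivAt_iff_tendsto_slope.mp hg
  have hev : ∀ᶠ x in 𝓝[≠] m1, slope g m1 x < 0 :=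
    hslope.eventually (eventually_lt_nhds hE)
  have hlt : 𝓝[<] m1 ≤ 𝓝[≠] m1 :=
    nhdsWithin_mono _ (fun x hx => ne_of_lt hx)
  have hev2 : ∀ᶠ x in 𝓝[<] m1, slope g m1 x < 0 := hev.filter_mono hlt
  have hmem : ∀ᶠ x in 𝓝[<] m1, x ∈ Ioo 0 m1 :=
    Ioo_mem_nhdsLT_of_mem ⟨hm1, le_refl m1⟩
  obtain ⟨x, hs, hx⟩ := (hev2.and hmem).exists
  have hgm1 : g m1 = 0 := by simp [hgdef]
  rw [slope_def_field, hgm1] at hs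
  have hxm : x - m1 < 0 := by linarith [hx.2]
  have hgx : 0 < g x := by
    rcases div_neg_iff.mp (by simpa using hs) with ⟨ha, hb⟩ | ⟨ha, hb⟩
    · exact ha
    · linarith
  have := hpoly x ⟨hx.1.le, hx.2.le⟩
  simp only [hgdef] at hgx
  linarith



/-- Average reward of pool 1 in the two-player miner's dilemma with betrayal,
where the total mining power is `m1 + m2 + t`. -/
noncomputable def r1 (m1 m2 t p x1 x2 : ℝ) : ℝ :=
  (m1*m2 + m1*x1 + p*m2*x2 - (1-p)*x1^2 - (1-p)*x1*x2) /
    (((m1+m2+t) - (1-p)*(x1+x2)) * (m1*m2 + m1*x1 + m2*x2))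

/-- Average reward of pool 2. -/
noncomputable def r2 (m1 m2 t p x1 x2 : ℝ) : ℝ :=
  (m1*m2 + m2*x2 + p*m1*x1 - (1-p)*x2^2 - (1-p)*x1*x2) /
    (((m1+m2+t) - (1-p)*(x1+x2)) * (m1*m2 + m1*x1 + m2*x2))

/-- `(x1, x2)` is a pure Nash equilibrium of the two-player miner's dilemma game. -/
noncomputable def IsNash (m1 m2 t p x1 x2 : ℝ) : Prop :=
  x1 ∈ Set.Icc 0 m1 ∧ x2 ∈ Set.Icc 0 m2 ∧
  (∀ x ∈ Set.Icc (0:ℝ) m1, r1 m1 m2 t p x x2 ≤ r1 m1 m2 t p x1 x2) ∧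
  (∀ x ∈ Set.Icc (0:ℝ) m2, r2 m1 m2 t p x1 x ≤ r2 m1 m2 t p x1 x2)

/-- No pool uses all of its mining power at equilibrium (the profile
`(m1, m2)` with `t = p = 0`, where rewards are undefined, is excluded). -/
theorem stmt7 (m1 m2 t p : ℝ) (hm1 : 0 < m1) (hm2 : 0 < m2) (ht : 0 ≤ t)
    (hp0 : 0 ≤ p) (hp1 : p < 1) (x1s x2s : ℝ)
    (hne : IsNash m1 m2 t p x1s x2s)
    (hexc : ¬(t = 0 ∧ p = 0 ∧ x1s = m1 ∧ x2s = m2)) :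
    x1s ≠ m1 ∧ x2s ≠ m2 := by
  obtain ⟨⟨hx10, hx11⟩, ⟨hx20, hx21⟩, hn1, hn2⟩ := hne
  constructor
  · intro h1
    refine key m1 m2 t p hm1 hm2 ht hp0 hp1 x2s hx20 hx21
      (fun hd => hexc ⟨hd.1, hd.2.1, h1, hd.2.2⟩) (fun x hx => ?_)
    have := hn1 x hx
    rw [h1] at this
    simpa [r1] using this
  · intro h2
    refine key m2 m1 t p hm2 hm1 ht hp0 hp1 x1s hx10 hx11
      (fun hd => hexc ⟨hd.1, hd.2.1, hd.2.2, h2⟩) (fun x hx => ?_)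
    have := hn2 x hx
    rw [h2] at this
    have e1 : r2 m1 m2 t p x1s x = r1 m2 m1 t p x x1s := by
      simp only [r1, r2]; ring_nf
    have e2 : r2 m1 m2 t p x1s m2 = r1 m2 m1 t p m2 x1s := by
      simp only [r1, r2]; ring_nf
    rw [e1, e2] at this
    simpa [r1] using this
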